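/- arXiv:1607.02006 — 11 statements merged into one kernel-verified Lean document; each statement's English description precedes it below -/
import Mathlib

section
/- For all complex numbers z, a, b with |a| = 1, one has |(z+a)(a+b)|^2 + |(z-a)(a-b)|^2 = 2|z+b|^2 + 2|z·b + a^2|^2. -/
/-! With `u = a (z + b)` and `v = z b + a²`, the two products are `u + v` and `u - v`, so the
parallelogram law gives `2‖u‖² + 2‖v‖²`, and `‖u‖ = ‖z + b‖` because `‖a‖ = 1`. -/

theorem stmt0 (z a b : ℂ) (ha : ‖a‖ = 1) :
    ‖(z + a) * (a + b)‖ ^ 2 + ‖(z - a) * (a - b)‖ ^ 2 =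
      2 * ‖z + b‖ ^ 2 + 2 * ‖z * b + a ^ 2‖ ^ 2 := by
  have hsum : (z + a) * (a + b) = a * (z + b) + (z * b + a ^ 2) := by ring
  have hdiff : (z - a) * (a - b) = a * (z + b) - (z * b + a ^ 2) := by ring
  have parallelogram := parallelogram_law_with_norm ℝ (a * (z + b)) (z * b + a ^ 2)
  rw [norm_mul, ha, one_mul] at parallelogram
  rw [hsum, hdiff]
  linear_combination parallelogram
end

section
/- Define U : ℕ≥1 → ℚ by U(1) = 1, U(2N) = U(N), and U(2N+1) = (1/2)·U(N+1) + 2·U(N) + 1/2 for N ≥ 1. Then for all n ≥ 0 and all m ≥ 1, U(2^n·m + 1) = 2^{-n}·U(m+1) + 4·(1 - 2^{-n})·U(m) + 1 - 2^{-n}. -/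
theorem stmt3 (U : ℕ → ℚ) (h1 : U 1 = 1)
    (heven : ∀ N ≥ 1, U (2 * N) = U N)
    (hodd : ∀ N ≥ 1, U (2 * N + 1) = (1 / 2) * U (N + 1) + 2 * U N + 1 / 2) :
    ∀ n : ℕ, ∀ m ≥ 1, U (2 ^ n * m + 1) =
      (2 : ℚ) ^ (-(n : ℤ)) * U (m + 1) + 4 * (1 - (2 : ℚ) ^ (-(n : ℤ))) * U m
        + 1 - (2 : ℚ) ^ (-(n : ℤ)) := by
  have hpow : ∀ n : ℕ, ∀ m ≥ 1, U (2 ^ n * m) = U m := by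
    intro n
    induction n with
    | zero => intro m hm; simp
    | succ k ih =>
      intro m hm
      have h2 : 2 ^ (k + 1) * m = 2 * (2 ^ k * m) := by ring
      rw [h2, heven (2 ^ k * m) (by exact Nat.one_le_iff_ne_zero.mpr (by positivity)), ih m hm]
  intro n
  induction n with
  | zero => intro m hm; simp
  | succ k ih =>
    intro m hm
    have h2 : 2 ^ (k + 1) * m + 1 = 2 * (2 ^ k * m) + 1 := by ring
    rw [h2, hodd (2 ^ k * m) (by exact Nat.one_le_iff_ne_zero.mpr (by positivity)), ih m hm, hpow k m hm]
    have hk : ((k : ℤ) + 1) = (((k + 1 : ℕ) : ℤ)) := by push_cast; ring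
    have : (2 : ℚ) ^ (-(((k + 1 : ℕ) : ℤ))) = (2 : ℚ) ^ (-(k : ℤ)) / 2 := by
      rw [← hk, neg_add, zpow_add₀ (by norm_num : (2:ℚ) ≠ 0)]
      norm_num
      ring
    rw [this]; ring
end

section
/- Define U : ℕ≥1 → ℚ by U(1) = 1, U(2N) = U(N), U(2N+1) = (1/2)·U(N+1) + 2·U(N) + 1/2 for N ≥ 1. Then for every n ≥ 1, U(2^n - 1) ≤ 2^n - 1. -/
theorem stmt4 (U : ℕ → ℚ) (h1 : U 1 = 1)
    (heven : ∀ N ≥ 1, U (2 * N) = U N)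
    (hodd : ∀ N ≥ 1, U (2 * N + 1) = (1 / 2) * U (N + 1) + 2 * U N + 1 / 2) :
    ∀ n ≥ 1, U (2 ^ n - 1) ≤ 2 ^ n - 1 := by
  have hpow : ∀ k : ℕ, U (2 ^ k) = 1 := by
    intro k
    induction k with
    | zero => simpa using h1
    | succ k ih =>
      have := heven (2 ^ k) Nat.one_le_two_pow
      rw [pow_succ, mul_comm, this, ih]
  have key : ∀ n ≥ 1, U (2 ^ n - 1) = 2 ^ n - 1 := by
    intro n hn
    induction n with
    | zero => omega
    | succ n ih =>
      rcases Nat.eq_or_lt_of_le hn with h | h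
      · have : n = 0 := by omega
        subst this
        norm_num [h1]
      · have hn1 : n ≥ 1 := by omega
        have ihn := ih hn1
        have hN : 2 ^ n - 1 ≥ 1 := by
          have : 2 ^ n ≥ 2 ^ 1 := Nat.pow_le_pow_right (by norm_num) hn1
          omega
        have heq : 2 ^ (n + 1) - 1 = 2 * (2 ^ n - 1) + 1 := by
          have : 2 ^ n ≥ 1 := Nat.one_le_two_pow
          rw [pow_succ]; omega
        have hN1 : 2 ^ n - 1 + 1 = 2 ^ n := by
          have : 2 ^ n ≥ 1 := Nat.one_le_two_pow
          omega
        rw [heq, hodd _ hN, hN1, hpow, ihn]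
        push_cast [pow_succ]
        ring
  intro n hn
  rw [key n hn]
end

section
/- Define U : ℕ≥1 → ℚ as above, and for k ≥ 1 write k = 2^{p_0} + 2^{p_1} + ⋯ + 2^{p_s} with 0 ≤ p_0 < p_1 < ⋯ < p_s (the binary expansion of k), and set Δ(k) := 2^{-p_0}·k - U(k). Then for all 0 ≤ p_0 < p_1, Δ(2^{p_0} + 2^{p_1}) = 2^{p_0 - p_1}·(2^{p_1 - p_0} - 2)^2. -/
/-!
Doubling leaves `U` unchanged, so `U (2 ^ p₀ + 2 ^ p₁) = U (1 + 2 ^ m)` with `m = p₁ - p₀`, and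
the odd-step recurrence applied along `2 ^ m + 1 = 2 * 2 ^ (m - 1) + 1` gives
`U (2 ^ m + 1) = 5 - 4 / 2 ^ m`. Since `2 ^ p₀` exactly divides `2 ^ p₀ + 2 ^ p₁`, this makes
`Δ (2 ^ p₀ + 2 ^ p₁) = 2 ^ m - 4 + 4 / 2 ^ m = (2 ^ m - 2) ^ 2 / 2 ^ m`.
-/

theorem padicValNat_two_pow_mul_one_add_two_pow (p : ℕ) {m : ℕ} (hm : m ≠ 0) :
    padicValNat 2 (2 ^ p * (1 + 2 ^ m)) = p := by
  have hodd : Odd (1 + 2 ^ m) := (Nat.even_pow.mpr ⟨even_two, hm⟩).one_add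
  rw [padicValNat.mul (by positivity) (by positivity), padicValNat.prime_pow,
    padicValNat.eq_zero_of_not_dvd hodd.not_two_dvd_nat, add_zero]

section

variable {U : ℕ → ℚ}

theorem apply_two_pow_mul_of_apply_two_mul (heven : ∀ N ≥ 1, U (2 * N) = U N)
    (p : ℕ) {N : ℕ} (hN : 1 ≤ N) : U (2 ^ p * N) = U N := by
  induction p with
  | zero => simp
  | succ p ih =>
    rw [pow_succ', mul_assoc, heven _ (Nat.one_le_iff_ne_zero.mpr (by positivity)), ih]

theorem apply_two_pow_add_one (h1 : U 1 = 1) (heven : ∀ N ≥ 1, U (2 * N) = U N)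
    (hodd : ∀ N ≥ 1, U (2 * N + 1) = (1 / 2) * U (N + 1) + 2 * U N + 1 / 2) (m : ℕ) :
    U (2 ^ m + 1) = 5 - 4 / 2 ^ m := by
  have hpow : ∀ p, U (2 ^ p) = 1 := fun p => by
    simpa [h1] using apply_two_pow_mul_of_apply_two_mul heven p le_rfl
  induction m with
  | zero => norm_num [heven 1 le_rfl, h1]
  | succ m ih =>
    rw [pow_succ', hodd _ Nat.one_le_two_pow, ih, hpow]
    field_simp
    ring

end

theorem stmt5 (U : ℕ → ℚ) (h1 : U 1 = 1)
    (heven : ∀ N ≥ 1, U (2 * N) = U N)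
    (hodd : ∀ N ≥ 1, U (2 * N + 1) = (1 / 2) * U (N + 1) + 2 * U N + 1 / 2)
    (Δ : ℕ → ℚ)
    (hΔ : ∀ k ≥ 1, Δ k = (2 : ℚ) ^ (-(padicValNat 2 k : ℤ)) * k - U k)
    (p₀ p₁ : ℕ) (hp : p₀ < p₁) :
    Δ (2 ^ p₀ + 2 ^ p₁) =
      (2 : ℚ) ^ ((p₀ : ℤ) - p₁) * ((2 : ℚ) ^ ((p₁ : ℤ) - p₀) - 2) ^ 2 := by
  obtain ⟨m, rfl⟩ : ∃ m, p₁ = p₀ + m := ⟨p₁ - p₀, by omega⟩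
  have hm : m ≠ 0 := by omega
  have hk : 2 ^ p₀ + 2 ^ (p₀ + m) = 2 ^ p₀ * (1 + 2 ^ m) := by ring
  have hU : U (2 ^ p₀ * (1 + 2 ^ m)) = 5 - 4 / 2 ^ m := by
    rw [apply_two_pow_mul_of_apply_two_mul heven p₀ (Nat.le_add_right 1 _), add_comm,
      apply_two_pow_add_one h1 heven hodd]
  rw [hk, hΔ _ (Nat.one_le_iff_ne_zero.mpr (by positivity)),
    padicValNat_two_pow_mul_one_add_two_pow p₀ hm, hU]
  push_cast
  rw [show (p₀ : ℤ) - (p₀ + m) = -m by ring, show (p₀ : ℤ) + m - p₀ = m by ring]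
  simp only [zpow_neg, zpow_natCast]
  field_simp
  ring
end

section
/- Define U : ℕ≥1 → ℚ by U(1) = 1, U(2N) = U(N), U(2N+1) = (1/2)U(N+1) + 2U(N) + 1/2. Then for every k ≥ 1, U(k) ≤ 2^{-v₂(k)}·k, where v₂(k) denotes the 2-adic valuation of k. -/
theorem stmt7 (U : ℕ → ℚ) (h1 : U 1 = 1)
    (heven : ∀ N ≥ 1, U (2 * N) = U N)
    (hodd : ∀ N ≥ 1, U (2 * N + 1) = (1 / 2) * U (N + 1) + 2 * U N + 1 / 2) :
    ∀ k ≥ 1, U k ≤ (2 : ℚ) ^ (-(padicValNat 2 k : ℤ)) * k := by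
  have key : ∀ N, 1 ≤ N → U N ≤ (N : ℚ) ∧ 2 * U N + U (N + 1) ≤ 2 * (N : ℚ) + 1 := by
    intro N
    induction N using Nat.strong_induction_on with
    | _ N ih =>
      intro hN
      rcases Nat.even_or_odd N with ⟨M, hM⟩ | ⟨M, hM⟩
      · -- N = 2M
        have hM1 : 1 ≤ M := by omega
        have hN' : N = 2 * M := by omega
        subst hN'
        obtain ⟨p, r⟩ := ih M (by omega) hM1
        have e1 := heven M hM1
        have e2 := hodd M hM1
        constructor
        · rw [e1]; push_cast; linarith
        · rw [e1, e2]; push_cast; linarith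
      · -- N = 2M + 1
        have hN' : N = 2 * M + 1 := by omega
        subst hN'
        rcases Nat.eq_zero_or_pos M with hM0 | hM1
        · subst hM0
          have e1 : U 2 = U 1 := heven 1 le_rfl
          constructor
          · simp [h1]
          · rw [show (2 * 0 + 1 + 1) = 2 from rfl, e1, h1]; norm_num
        · obtain ⟨p, r⟩ := ih M (by omega) hM1
          have e2 := hodd M hM1
          have e3 : U (2 * M + 1 + 1) = U (M + 1) := by
            rw [show 2 * M + 1 + 1 = 2 * (M + 1) from by ring]
            exact heven (M + 1) (by omega)
          constructor
          · rw [e2]; push_cast; linarith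
          · rw [e2, e3]; push_cast; linarith
  intro k
  induction k using Nat.strong_induction_on with
  | _ k ih =>
    intro hk
    rcases Nat.even_or_odd k with ⟨M, hM⟩ | ⟨M, hM⟩
    · have hM1 : 1 ≤ M := by omega
      have hk2 : k = 2 * M := by omega
      subst hk2
      have hv : padicValNat 2 (2 * M) = padicValNat 2 M + 1 := by
        rw [padicValNat.mul (by norm_num) (by omega),
          padicValNat.self (by norm_num)]
        omega
      have hrec := ih M (by omega) hM1
      rw [heven M hM1, hv]
      have heq : (2 : ℚ) ^ (-((padicValNat 2 M + 1 : ℕ) : ℤ)) * ((2 * M : ℕ) : ℚ)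
          = (2 : ℚ) ^ (-(padicValNat 2 M : ℤ)) * (M : ℚ) := by
        push_cast
        rw [neg_add, zpow_add₀ (by norm_num : (2:ℚ) ≠ 0)]
        norm_num
        ring
      rw [heq]
      exact hrec
    · have hv : padicValNat 2 k = 0 := padicValNat.eq_zero_of_not_dvd (by omega)
      rw [hv]
      simpa using (key k hk).1
end

section
/- Define U : ℕ≥1 → ℚ by U(1) = 1, U(2N) = U(N), U(2N+1) = (1/2)U(N+1) + 2U(N) + 1/2, and Δ(k) = 2^{-v₂(k)}·k - U(k). Then Δ(k) = 0 if and only if k = 2^{p}·(2^n - 1) for some p ≥ 0 and n ≥ 1. -/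
private lemma mers_odd {n : ℕ} (hn : 1 ≤ n) : ¬ 2 ∣ (2^n - 1) := by
  have h2 : 2 ∣ 2^n := dvd_pow_self 2 (by omega)
  have h1 : 2 ≤ 2^n := Nat.one_lt_two_pow_iff.mpr (by omega)
  omega

private lemma odd_form {k : ℕ} (hk : ¬ 2 ∣ k) :
    (∃ p, ∃ n, 1 ≤ n ∧ k = 2^p*(2^n-1)) ↔ ∃ n, 1 ≤ n ∧ k = 2^n-1 := by
  constructor
  · rintro ⟨p, n, hn, rfl⟩
    refine ⟨n, hn, ?_⟩
    rcases p with _ | q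
    · simp
    · exfalso
      apply hk
      rw [pow_succ, mul_comm (2^q) 2, mul_assoc]
      exact ⟨_, rfl⟩
  · rintro ⟨n, hn, rfl⟩
    exact ⟨0, n, hn, by simp⟩

private lemma even_form {N : ℕ} (hN : 1 ≤ N) :
    (∃ p, ∃ n, 1 ≤ n ∧ 2*N = 2^p*(2^n-1)) ↔ (∃ p, ∃ n, 1 ≤ n ∧ N = 2^p*(2^n-1)) := by
  constructor
  · rintro ⟨p, n, hn, h⟩
    rcases p with _ | q
    · exfalso
      have := mers_odd hn
      simp at h
      omega
    · refine ⟨q, n, hn, ?_⟩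
      rw [pow_succ, mul_comm (2^q) 2, mul_assoc] at h
      omega
  · rintro ⟨p, n, hn, rfl⟩
    exact ⟨p+1, n, hn, by rw [pow_succ]; ring⟩

private lemma not_form_4M1 {M : ℕ} (hM : 1 ≤ M) :
    ¬ (∃ p, ∃ n, 1 ≤ n ∧ 4*M+1 = 2^p*(2^n-1)) := by
  rw [odd_form (by omega)]
  rintro ⟨n, hn, h⟩
  have h1 : 2 ≤ 2^n := Nat.one_lt_two_pow_iff.mpr (by omega)
  have h2 : 4*M+2 = 2^n := by omega
  rcases n with _ | _ | m
  · omega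
  · simp at h2; omega
  · have : 2^(m+2) = 4*2^m := by ring
    omega

private lemma form_4M3 {M : ℕ} :
    (∃ p, ∃ n, 1 ≤ n ∧ 4*M+3 = 2^p*(2^n-1)) ↔ ∃ m, M+1 = 2^m := by
  rw [odd_form (by omega)]
  constructor
  · rintro ⟨n, hn, h⟩
    have h1 : 2 ≤ 2^n := Nat.one_lt_two_pow_iff.mpr (by omega)
    have h2 : 4*M+4 = 2^n := by omega
    rcases n with _ | _ | m
    · omega
    · simp at h2
    · have : 2^(m+2) = 4*2^m := by ring
      exact ⟨m, by omega⟩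
  · rintro ⟨m, hm⟩
    refine ⟨m+2, by omega, ?_⟩
    have : 2^(m+2) = 4*2^m := by ring
    have h1 : 1 ≤ 2^m := Nat.one_le_two_pow
    omega

private lemma form_2M1_of_pow {M m : ℕ} (hm : M+1 = 2^m) :
    ∃ p, ∃ n, 1 ≤ n ∧ 2*M+1 = 2^p*(2^n-1) := by
  refine ⟨0, m+1, by omega, ?_⟩
  have : 2^(m+1) = 2*2^m := by ring
  have h1 : 1 ≤ 2^m := Nat.one_le_two_pow
  simp only [pow_zero, one_mul]
  omega

private lemma pow_of_form_2M1 {M : ℕ} (h : ∃ p, ∃ n, 1 ≤ n ∧ 2*M+1 = 2^p*(2^n-1)) :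
    ∃ m, M+1 = 2^m := by
  rw [odd_form (by omega)] at h
  obtain ⟨n, hn, h⟩ := h
  have h1 : 2 ≤ 2^n := Nat.one_lt_two_pow_iff.mpr (by omega)
  obtain ⟨n', rfl⟩ : ∃ n', n = n' + 1 := ⟨n - 1, by omega⟩
  have : 2^(n'+1) = 2*2^n' := by ring
  exact ⟨n', by omega⟩

private lemma big (U : ℕ → ℚ) (h1 : U 1 = 1)
    (heven : ∀ N ≥ 1, U (2 * N) = U N)
    (hodd : ∀ N ≥ 1, U (2 * N + 1) = (1 / 2) * U (N + 1) + 2 * U N + 1 / 2)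
    (Δ : ℕ → ℚ)
    (hΔ : ∀ k ≥ 1, Δ k = (2 : ℚ) ^ (-(padicValNat 2 k : ℤ)) * k - U k) :
    ∀ k, 1 ≤ k → (0 ≤ Δ k ∧ 1 ≤ U k ∧ (U k = 1 ↔ ∃ p, k = 2^p)
      ∧ (∀ M, k = 2*M+1 → (U (M+1) - 1)/2 ≤ Δ k)
      ∧ (Δ k = 0 ↔ ∃ p, ∃ n, 1 ≤ n ∧ k = 2^p*(2^n-1))) := by
  have hΔodd : ∀ m, 1 ≤ m → ¬ 2 ∣ m → Δ m = (m : ℚ) - U m := by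
    intro m hm hm2
    rw [hΔ m hm, padicValNat.eq_zero_of_not_dvd hm2]
    norm_num
  have hΔeven : ∀ N, 1 ≤ N → Δ (2*N) = Δ N := by
    intro N hN
    have hv : padicValNat 2 (2*N) = padicValNat 2 N + 1 := by
      rw [padicValNat.mul (by norm_num) (by omega)]
      simp [padicValNat.self]
      omega
    rw [hΔ (2*N) (by omega), hΔ N hN, heven N hN, hv]
    have key : ((2:ℚ))^(-((padicValNat 2 N + 1 : ℕ) : ℤ)) * 2 = (2:ℚ)^(-(padicValNat 2 N:ℤ)) := by
      push_cast
      rw [neg_add, zpow_add₀ (two_ne_zero)]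
      norm_num
      ring
    push_cast
    push_cast at key
    nlinarith [key]
  have hfle : ∀ m : ℕ, (2:ℚ)^(-(padicValNat 2 m : ℤ)) * m ≤ m := by
    intro m
    have h1 : ((2:ℚ))^(-(padicValNat 2 m : ℤ)) ≤ 1 :=
      zpow_le_one_of_nonpos₀ (by norm_num) (by omega)
    have h2 : (0:ℚ) ≤ m := by positivity
    nlinarith
  intro k
  induction k using Nat.strong_induction_on with
  | _ k ih =>
    intro hk
    rcases Nat.even_or_odd k with hE | hO
    · -- even case k = 2N
      obtain ⟨N, rfl⟩ : ∃ N, k = 2 * N := ⟨k/2, by have := hE.two_dvd; omega⟩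
      have hN : 1 ≤ N := by omega
      obtain ⟨ihΔ, ihU, ihU1, ihM, ihform⟩ := ih N (by omega) hN
      have hd : Δ (2*N) = Δ N := hΔeven N hN
      have hu : U (2*N) = U N := heven N hN
      refine ⟨by rw [hd]; exact ihΔ, by rw [hu]; exact ihU, ?_, ?_, ?_⟩
      · rw [hu, ihU1]
        constructor
        · rintro ⟨p, rfl⟩
          exact ⟨p+1, by ring⟩
        · rintro ⟨p, hp⟩
          rcases p with _ | q
          · simp at hp
          · refine ⟨q, ?_⟩
            rw [pow_succ, mul_comm] at hp
            omega
      · intro M hM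
        omega
      · rw [hd, ihform]
        exact (even_form hN).symm
    · -- odd case k = 2N+1
      obtain ⟨N, rfl⟩ := hO
      rcases Nat.eq_zero_or_pos N with rfl | hN
      · -- k = 1
        simp only [mul_zero, zero_add]
        have hd : Δ 1 = 0 := by
          rw [hΔodd 1 le_rfl (by omega), h1]
          norm_num
        refine ⟨by rw [hd], by rw [h1], ?_, ?_, ?_⟩
        · exact ⟨fun _ => ⟨0, rfl⟩, fun _ => h1⟩
        · intro M hM
          have : M = 0 := by omega
          subst this
          rw [hd, h1]
          norm_num
        · rw [hd]
          refine ⟨fun _ => ⟨0, 1, le_rfl, by norm_num⟩, fun _ => rfl⟩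
      · -- k = 2N+1, N ≥ 1
        have hkodd : ¬ 2 ∣ (2*N+1) := by omega
        have hd : Δ (2*N+1) = ((2*N+1 : ℕ) : ℚ) - U (2*N+1) := hΔodd _ (by omega) hkodd
        have hU : U (2*N+1) = (1/2) * U (N+1) + 2 * U N + 1/2 := hodd N hN
        rcases Nat.even_or_odd N with hE2 | hO2
        · -- N = 2M, k = 4M+1, M ≥ 1
          obtain ⟨M, rfl⟩ : ∃ M, N = 2 * M := ⟨N/2, by have := hE2.two_dvd; omega⟩
          have hM : 1 ≤ M := by omega
          obtain ⟨ihΔ1, ihU1, ihP1, ihB1, ihF1⟩ := ih (2*M+1) (by omega) (by omega)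
          obtain ⟨ihΔ2, ihU2, ihP2, ihB2, ihF2⟩ := ih M (by omega) hM
          have hd1 : Δ (2*M+1) = ((2*M+1 : ℕ) : ℚ) - U (2*M+1) := hΔodd _ (by omega) (by omega)
          have hUle1 : U (2*M+1) ≤ ((2*M+1 : ℕ) : ℚ) := by linarith [hd1 ▸ ihΔ1]
          have hUle2 : U M ≤ (M : ℚ) := by
            have := hΔ M (by omega)
            have := hfle M
            linarith [ihΔ2]
          have hUe : U (2*(2*M)+1) = (1/2) * U (2*M+1) + 2 * U M + 1/2 := by
            have := hodd (2*M) (by omega)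
            rw [this, heven M (by omega)]
          have hdk : Δ (2*(2*M)+1) = ((2*(2*M)+1 : ℕ) : ℚ) - U (2*(2*M)+1) :=
            hΔodd _ (by omega) (by omega)
          have hcast : ((2*(2*M)+1 : ℕ) : ℚ) = 4*(M:ℚ)+1 := by push_cast; ring
          have hcast1 : ((2*M+1 : ℕ) : ℚ) = 2*(M:ℚ)+1 := by push_cast; ring
          have hΔpos : (M:ℚ) ≤ Δ (2*(2*M)+1) := by
            rw [hdk, hUe, hcast]
            rw [hcast1] at hUle1
            linarith
          have hMQ : (1:ℚ) ≤ (M:ℚ) := by exact_mod_cast hM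
          refine ⟨by linarith, ?_, ?_, ?_, ?_⟩
          · rw [hUe]; linarith
          · constructor
            · intro h
              rw [hUe] at h
              exfalso
              linarith
            · rintro ⟨p, hp⟩
              exfalso
              rcases p with _ | q
              · simp at hp; omega
              · rw [pow_succ] at hp; omega
          · intro M' hM'
            have : M' = 2*M := by omega
            subst this
            rw [hdk, hUe, hcast]
            rw [hcast1] at hUle1
            linarith
          · constructor
            · intro h
              exfalso
              rw [h] at hΔpos
              linarith
            · intro h
              exfalso
              have : ∃ p, ∃ n, 1 ≤ n ∧ 4*M+1 = 2^p*(2^n-1) := by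
                obtain ⟨p, n, hn, he⟩ := h
                exact ⟨p, n, hn, by omega⟩
              exact not_form_4M1 hM this
        · -- N = 2M+1, k = 4M+3, M ≥ 0
          obtain ⟨M, rfl⟩ := hO2
          obtain ⟨ihΔ1, ihU1, ihP1, ihB1, ihF1⟩ := ih (2*M+1) (by omega) (by omega)
          obtain ⟨ihΔ2, ihU2, ihP2, ihB2, ihF2⟩ := ih (M+1) (by omega) (by omega)
          have hd1 : Δ (2*M+1) = ((2*M+1 : ℕ) : ℚ) - U (2*M+1) := hΔodd _ (by omega) (by omega)
          have hB : (U (M+1) - 1)/2 ≤ Δ (2*M+1) := ihB1 M rfl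
          have hUe : U (2*(2*M+1)+1) = (1/2) * U (M+1) + 2 * U (2*M+1) + 1/2 := by
            have h' := hodd (2*M+1) (by omega)
            have h'' : U (2*M+1+1) = U (M+1) := by
              have : 2*M+1+1 = 2*(M+1) := by ring
              rw [this, heven (M+1) (by omega)]
            rw [h', h'']
          have hdk : Δ (2*(2*M+1)+1) = ((2*(2*M+1)+1 : ℕ) : ℚ) - U (2*(2*M+1)+1) :=
            hΔodd _ (by omega) (by omega)
          have hcast : ((2*(2*M+1)+1 : ℕ) : ℚ) = 4*(M:ℚ)+3 := by push_cast; ring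
          have hcast1 : ((2*M+1 : ℕ) : ℚ) = 2*(M:ℚ)+1 := by push_cast; ring
          -- Δ k = 2 Δ(2M+1) - (U(M+1)-1)/2
          have hkey : Δ (2*(2*M+1)+1) = 2 * Δ (2*M+1) - (U (M+1) - 1)/2 := by
            rw [hdk, hUe, hcast, hd1, hcast1]
            ring
          have hΔnn : (U (M+1) - 1)/2 ≤ Δ (2*(2*M+1)+1) := by
            rw [hkey]; linarith
          have hu2 : (0:ℚ) ≤ (U (M+1) - 1)/2 := by linarith
          refine ⟨by linarith, ?_, ?_, ?_, ?_⟩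
          · rw [hUe]; linarith
          · constructor
            · intro h
              rw [hUe] at h
              exfalso
              linarith
            · rintro ⟨p, hp⟩
              exfalso
              rcases p with _ | q
              · simp at hp
              · rw [pow_succ] at hp; omega
          · intro M' hM'
            have : M' = 2*M+1 := by omega
            subst this
            have : U (2*M+1+1) = U (M+1) := by
              have h2 : 2*M+1+1 = 2*(M+1) := by ring
              rw [h2, heven (M+1) (by omega)]
            rw [this]
            exact hΔnn
          · constructor
            · intro h
              -- Δ(2M+1) = 0
              have hu0 : U (M+1) = 1 := by
                rw [h] at hΔnn
                rw [hkey] at h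
                linarith
              have hΔ10 : Δ (2*M+1) = 0 := by
                rw [hkey, hu0] at h
                linarith
              obtain ⟨m, hm⟩ := pow_of_form_2M1 (ihF1.mp hΔ10)
              have : ∃ p, ∃ n, 1 ≤ n ∧ 4*M+3 = 2^p*(2^n-1) := by
                rw [form_4M3]
                exact ⟨m, hm⟩
              obtain ⟨p, n, hn, he⟩ := this
              exact ⟨p, n, hn, by omega⟩
            · intro h
              have h' : ∃ p, ∃ n, 1 ≤ n ∧ 4*M+3 = 2^p*(2^n-1) := by
                obtain ⟨p, n, hn, he⟩ := h
                exact ⟨p, n, hn, by omega⟩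
              obtain ⟨m, hm⟩ := form_4M3.mp h'
              have hu0 : U (M+1) = 1 := ihP2.mpr ⟨m, hm⟩
              have hΔ10 : Δ (2*M+1) = 0 := ihF1.mpr (form_2M1_of_pow hm)
              rw [hkey, hΔ10, hu0]
              ring

theorem stmt8 (U : ℕ → ℚ) (h1 : U 1 = 1)
    (heven : ∀ N ≥ 1, U (2 * N) = U N)
    (hodd : ∀ N ≥ 1, U (2 * N + 1) = (1 / 2) * U (N + 1) + 2 * U N + 1 / 2)
    (Δ : ℕ → ℚ)
    (hΔ : ∀ k ≥ 1, Δ k = (2 : ℚ) ^ (-(padicValNat 2 k : ℤ)) * k - U k)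
    (k : ℕ) (hk : 1 ≤ k) :
    Δ k = 0 ↔ ∃ p : ℕ, ∃ n ≥ 1, k = 2 ^ p * (2 ^ n - 1) := by
  have := (big U h1 heven hodd Δ hΔ k hk).2.2.2.2
  rw [this]
end

section
/- Define U : ℕ≥1 → ℚ by U(1) = 1, U(2N) = U(N), U(2N+1) = (1/2)U(N+1) + 2U(N) + 1/2. Then for all s ≥ 2 and 0 ≤ p_0 < p_1 < ⋯ < p_s, with k = 2^{p_0} + ⋯ + 2^{p_s}, one has U(k) = 1 + 2^{p_0 - p_1}·[ (2^{2 + p_1 - p_0} - 2)·U(2^{p_1} + ⋯ + 2^{p_s}) - 4·U(2^{p_2} + ⋯ + 2^{p_s}) - 2 ]. -/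
/-!
Writing `2^{p₁} + ⋯ + 2^{p_s} = 2^{p₁} (2M + 1)` with `M ≥ 1`, the number `k` becomes
`2^{p₀} (2^{p₁ - p₀} (2M + 1) + 1)`. Iterating the recursion strips the factor `2^{p₀}` and turns
`U (2^n m + 1)` into an affine combination of `U (m + 1)` and `U m`; finally `U (2M + 2) = U (M + 1)`
is eliminated through the odd rule at `2M + 1`, leaving only `U (2M + 1)` and `U M`.
-/

open Finset

section Recursion

variable {U : ℕ → ℚ} (heven : ∀ N ≥ 1, U (2 * N) = U N)
  (hodd : ∀ N ≥ 1, U (2 * N + 1) = (1 / 2) * U (N + 1) + 2 * U N + 1 / 2)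

include heven in
lemma U_two_pow_mul (n : ℕ) {m : ℕ} (hm : 1 ≤ m) : U (2 ^ n * m) = U m := by
  induction n with
  | zero => simp
  | succ n ih =>
    rw [pow_succ', mul_assoc, heven _ (Nat.one_le_iff_ne_zero.2 (by positivity)), ih]

include heven hodd in
lemma U_two_pow_mul_add_one (n : ℕ) {m : ℕ} (hm : 1 ≤ m) :
    2 ^ n * U (2 ^ n * m + 1) = U (m + 1) + 4 * (2 ^ n - 1) * U m + 2 ^ n - 1 := by
  induction n with
  | zero => simp
  | succ n ih =>
    rw [show 2 ^ (n + 1) * m = 2 * (2 ^ n * m) by ring,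
      hodd _ (Nat.one_le_iff_ne_zero.2 (by positivity)), U_two_pow_mul heven n hm]
    linear_combination ih

include heven hodd in
lemma U_two_mul_add_two {M : ℕ} (hM : 1 ≤ M) :
    U (2 * M + 2) = 2 * U (2 * M + 1) - 4 * U M - 1 := by
  rw [hodd M hM, show 2 * M + 2 = 2 * (M + 1) by ring, heven _ (by omega)]
  ring

end Recursion

lemma exists_sum_Icc_two_pow_eq {s a q : ℕ} (ha : a ≤ s) (p : ℕ → ℕ)
    (hp : ∀ i ∈ Icc a s, q ≤ p i) :
    ∃ M, 1 ≤ M ∧ ∑ i ∈ Icc a s, 2 ^ p i = 2 ^ q * M := by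
  obtain ⟨M, hM⟩ : 2 ^ q ∣ ∑ i ∈ Icc a s, 2 ^ p i :=
    dvd_sum fun i hi ↦ pow_dvd_pow 2 (hp i hi)
  have hpos : 0 < ∑ i ∈ Icc a s, 2 ^ p i :=
    sum_pos (fun i _ ↦ by positivity) ⟨a, mem_Icc.2 ⟨le_rfl, ha⟩⟩
  refine ⟨M, Nat.one_le_iff_ne_zero.2 ?_, hM⟩
  rintro rfl
  simp_all

theorem stmt9_general (U : ℕ → ℚ)
    (heven : ∀ N ≥ 1, U (2 * N) = U N)
    (hodd : ∀ N ≥ 1, U (2 * N + 1) = (1 / 2) * U (N + 1) + 2 * U N + 1 / 2)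
    (s : ℕ) (hs : 2 ≤ s) (p : ℕ → ℕ) (hp : StrictMonoOn p (Set.Iic s)) :
    U (∑ i ∈ Finset.range (s + 1), 2 ^ p i) =
      1 + (2 : ℚ) ^ ((p 0 : ℤ) - p 1) *
        (((2 : ℚ) ^ ((2 + p 1 : ℤ) - p 0) - 2) *
            U (∑ i ∈ Finset.Icc 1 s, 2 ^ p i)
          - 4 * U (∑ i ∈ Finset.Icc 2 s, 2 ^ p i) - 2) := by
  obtain ⟨n, hn⟩ := Nat.exists_eq_add_of_le (hp.monotoneOn (by simp) (by simp; omega) zero_le_one)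
  obtain ⟨M, hM, htail⟩ := exists_sum_Icc_two_pow_eq (q := p 1 + 1) hs p fun i hi ↦
    hp (by simp; omega) (by simp [(mem_Icc.1 hi).2]) (by simp at hi; omega)
  have hsum₁ : ∑ i ∈ Icc 1 s, 2 ^ p i = 2 ^ p 1 * (2 * M + 1) := by
    rw [← add_sum_Ioc_eq_sum_Icc (by omega), ← Icc_add_one_left_eq_Ioc, one_add_one_eq_two, htail]
    ring
  have hsum₀ : ∑ i ∈ range (s + 1), 2 ^ p i = 2 ^ p 0 * (2 ^ n * (2 * M + 1) + 1) := by
    rw [range_eq_Ico, Ico_add_one_right_eq_Icc, ← add_sum_Ioc_eq_sum_Icc (by omega),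
      ← Icc_add_one_left_eq_Ioc, zero_add, hsum₁, hn]
    ring
  have hodd_step := U_two_pow_mul_add_one heven hodd n (m := 2 * M + 1) (by omega)
  have heven_step := U_two_mul_add_two heven hodd hM
  rw [hsum₀, hsum₁, htail, U_two_pow_mul heven _ (by omega), U_two_pow_mul heven _ (by omega),
    U_two_pow_mul heven _ hM, hn]
  rw [show (2 * M + 1 + 1 : ℕ) = 2 * M + 2 by ring] at hodd_step
  push_cast
  rw [show ((p 0 : ℤ) - (p 0 + n)) = -n by ring, show (2 + (p 0 + n : ℤ) - p 0) = 2 + n by ring,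
    zpow_neg, zpow_add₀ two_ne_zero, zpow_natCast]
  field_simp
  linear_combination hodd_step + heven_step

theorem stmt9 (U : ℕ → ℚ) (h1 : U 1 = 1)
    (heven : ∀ N ≥ 1, U (2 * N) = U N)
    (hodd : ∀ N ≥ 1, U (2 * N + 1) = (1 / 2) * U (N + 1) + 2 * U N + 1 / 2)
    (s : ℕ) (hs : 2 ≤ s) (p : ℕ → ℕ) (hp : StrictMonoOn p (Set.Iic s)) :
    U (∑ i ∈ Finset.range (s + 1), 2 ^ p i) =
      1 + (2 : ℚ) ^ ((p 0 : ℤ) - p 1) *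
        (((2 : ℚ) ^ ((2 + p 1 : ℤ) - p 0) - 2) *
            U (∑ i ∈ Finset.Icc 1 s, 2 ^ p i)
          - 4 * U (∑ i ∈ Finset.Icc 2 s, 2 ^ p i) - 2) :=
  stmt9_general U heven hodd s hs p hp
end

section
/- Let e_0, …, e_{2N} be pairwise distinct points on the unit circle with e_{2j+1} = -e_{2j} and e_{2j}² = e_j for 0 ≤ j ≤ N. Then for 0 ≤ j ≤ N-1 and all z ∈ ℂ: l_{2j,2N+1}(z) = [(z - e_{2N})(z + e_{2j})(e_{2j} + e_{2N})] / [2 e_{2j} (e_j - e_N)] · l_{j,N}(z²), where l_{j,k}(z) = Π_{i≠j, 0≤i<k} (z - e_i)/(e_j - e_i). -/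
/-!
Removing `e_{2j}` from the nodes `e_0, …, e_{2N}` leaves `e_{2N}`, `e_{2j+1} = -e_{2j}` and the
pairs `±e_{2i}` for `i < N`, `i ≠ j`. Since `e_{2i}² = e_i`, each pair contributes
`(z - e_{2i})(z + e_{2i}) / ((e_{2j} - e_{2i})(e_{2j} + e_{2i})) = (z² - e_i) / (e_j - e_i)`,
a factor of `l_{j,N}(z²)`, and the two remaining factors combine into the stated prefactor once
`e_j - e_N` is written as `(e_{2j} - e_{2N})(e_{2j} + e_{2N})`.
-/

/-- The fundamental Lagrange interpolation polynomial `l_{j,k}` at nodes `e 0, …, e (k-1)`. -/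
noncomputable def lagr (e : ℕ → ℂ) (j k : ℕ) (z : ℂ) : ℂ :=
  ∏ i ∈ (Finset.range k).erase j, (z - e i) / (e j - e i)

namespace Finset

variable {M : Type*} [CommMonoid M]

theorem prod_range_two_mul (f : ℕ → M) (n : ℕ) :
    ∏ i ∈ range (2 * n), f i = ∏ i ∈ range n, f (2 * i) * f (2 * i + 1) := by
  induction n with
  | zero => simp
  | succ n ih => rw [Nat.mul_succ, prod_range_succ, prod_range_succ, ih, prod_range_succ, mul_assoc]

theorem prod_range_two_mul_erase_two_mul (f : ℕ → M) {n j : ℕ} (hj : j < n) :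
    ∏ i ∈ (range (2 * n)).erase (2 * j), f i =
      f (2 * j + 1) * ∏ i ∈ (range n).erase j, f (2 * i) * f (2 * i + 1) := by
  have h2j : 2 * j ∈ range (2 * n) := mem_range.2 (by omega)
  -- Replacing `f (2 * j)` by `1` removes that factor without needing cancellation in `M`.
  have key := prod_range_two_mul (Function.update f (2 * j) 1) n
  rw [prod_update_of_mem h2j, one_mul, sdiff_singleton_eq_erase,
    ← mul_prod_erase _ _ (mem_range.2 hj)] at key
  rw [key, Function.update_self, one_mul, Function.update_of_ne (by omega)]
  congr 1
  refine prod_congr rfl fun i hi => ?_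
  have hij : i ≠ j := ne_of_mem_erase hi
  rw [Function.update_of_ne (by omega), Function.update_of_ne (by omega)]

theorem prod_range_two_mul_add_one_erase_two_mul (f : ℕ → M) {n j : ℕ} (hj : j < n) :
    ∏ i ∈ (range (2 * n + 1)).erase (2 * j), f i =
      f (2 * n) * (f (2 * j + 1) * ∏ i ∈ (range n).erase j, f (2 * i) * f (2 * i + 1)) := by
  rw [range_add_one, erase_insert_of_ne (by omega), prod_insert (by simp),
    prod_range_two_mul_erase_two_mul f hj]

end Finset

section Field

variable {K : Type*} [Field K]

theorem sub_div_sub_mul_sub_neg_div_sub_neg (z a b : K) :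
    (z - a) / (b - a) * ((z - -a) / (b - -a)) = (z ^ 2 - a ^ 2) / (b ^ 2 - a ^ 2) := by
  rw [div_mul_div_comm]
  ring

theorem sub_div_sub_mul_sub_neg_div_sub_neg_self (z a b : K) (hab : a + b ≠ 0) :
    (z - b) / (a - b) * ((z - -a) / (a - -a)) =
      (z - b) * (z + a) * (a + b) / (2 * a * (a ^ 2 - b ^ 2)) := by
  rw [div_mul_div_comm, sub_neg_eq_add, sub_neg_eq_add,
    show 2 * a * (a ^ 2 - b ^ 2) = (a - b) * (a + a) * (a + b) by ring, mul_div_mul_right _ _ hab]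

end Field

theorem stmt11_general (N : ℕ) (hN : 1 ≤ N) (e : ℕ → ℂ)
    (hdist : ∀ i ≤ 2 * N, ∀ j ≤ 2 * N, i ≠ j → e i ≠ e j)
    (hneg : ∀ j ≤ N, e (2 * j + 1) = -e (2 * j))
    (hsq : ∀ j ≤ N, (e (2 * j)) ^ 2 = e j)
    (j : ℕ) (hj : j ≤ N - 1) (z : ℂ) :
    lagr e (2 * j) (2 * N + 1) z =
      (z - e (2 * N)) * (z + e (2 * j)) * (e (2 * j) + e (2 * N)) /
        (2 * e (2 * j) * (e j - e N)) * lagr e j N (z ^ 2) := by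
  have hjN : j < N := by omega
  have hsum : e (2 * j) + e (2 * N) ≠ 0 := by
    intro h
    apply hdist j (by omega) N (by omega) hjN.ne
    rw [← hsq j hjN.le, ← hsq N le_rfl, eq_neg_of_add_eq_zero_left h, neg_sq]
  rw [lagr, Finset.prod_range_two_mul_add_one_erase_two_mul _ hjN, ← mul_assoc, hneg j hjN.le,
    sub_div_sub_mul_sub_neg_div_sub_neg_self _ _ _ hsum, hsq j hjN.le, hsq N le_rfl, lagr]
  congr 1
  refine Finset.prod_congr rfl fun i hi => ?_
  have hiN : i < N := Finset.mem_range.1 (Finset.mem_of_mem_erase hi)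
  rw [hneg i hiN.le, sub_div_sub_mul_sub_neg_div_sub_neg, hsq i hiN.le, hsq j hjN.le]

theorem stmt11 (N : ℕ) (hN : 1 ≤ N) (e : ℕ → ℂ)
    (hdist : ∀ i ≤ 2 * N, ∀ j ≤ 2 * N, i ≠ j → e i ≠ e j)
    (hmod : ∀ i ≤ 2 * N, ‖e i‖ = 1)
    (hneg : ∀ j ≤ N, e (2 * j + 1) = -e (2 * j))
    (hsq : ∀ j ≤ N, (e (2 * j)) ^ 2 = e j)
    (j : ℕ) (hj : j ≤ N - 1) (z : ℂ) :
    lagr e (2 * j) (2 * N + 1) z =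
      (z - e (2 * N)) * (z + e (2 * j)) * (e (2 * j) + e (2 * N)) /
        (2 * e (2 * j) * (e j - e N)) * lagr e j N (z ^ 2) :=
  stmt11_general N hN e hdist hneg hsq j hj z
end

section
/- Let e_0, …, e_{2N} be pairwise distinct points on the unit circle with e_{2j+1} = -e_{2j} and e_{2j}² = e_j for 0 ≤ j ≤ N. Then for all z ∈ ℂ, l_{2N,2N+1}(z) = l_{N,N+1}(z²), where l_{j,k}(z) = Π_{i≠j, 0≤i<k} (z - e_i)/(e_j - e_i). -/
theorem Finset.prod_range_two_mul_s12 {M : Type*} [CommMonoid M] (f : ℕ → M) (n : ℕ) :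
    ∏ i ∈ range (2 * n), f i = ∏ j ∈ range n, (f (2 * j) * f (2 * j + 1)) := by
  induction n with
  | zero => simp
  | succ n ih =>
    rw [Nat.mul_succ, prod_range_succ, prod_range_succ, ih, prod_range_succ, mul_assoc]

theorem sub_div_sub_mul_add_div_add {K : Type*} [Field K] (z w a : K) :
    (z - a) / (w - a) * ((z + a) / (w + a)) = (z ^ 2 - a ^ 2) / (w ^ 2 - a ^ 2) := by
  rw [div_mul_div_comm]
  ring

theorem lagr_last (e : ℕ → ℂ) (k : ℕ) (z : ℂ) :
    lagr e k (k + 1) z = ∏ i ∈ Finset.range k, (z - e i) / (e k - e i) := by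
  rw [lagr, Finset.range_add_one, Finset.erase_insert Finset.notMem_range_self]

theorem stmt12_general (N : ℕ) (e : ℕ → ℂ)
    (hneg : ∀ j ≤ N, e (2 * j + 1) = -e (2 * j))
    (hsq : ∀ j ≤ N, (e (2 * j)) ^ 2 = e j) (z : ℂ) :
    lagr e (2 * N) (2 * N + 1) z = lagr e N (N + 1) (z ^ 2) := by
  rw [lagr_last, lagr_last, Finset.prod_range_two_mul_s12]
  refine Finset.prod_congr rfl fun j hj => ?_
  have hjN : j ≤ N := (Finset.mem_range.mp hj).le
  rw [hneg j hjN, sub_neg_eq_add, sub_neg_eq_add, sub_div_sub_mul_add_div_add, hsq j hjN,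
    hsq N le_rfl]

theorem stmt12 (N : ℕ) (hN : 1 ≤ N) (e : ℕ → ℂ)
    (hdist : ∀ i ≤ 2 * N, ∀ j ≤ 2 * N, i ≠ j → e i ≠ e j)
    (hmod : ∀ i ≤ 2 * N, ‖e i‖ = 1)
    (hneg : ∀ j ≤ N, e (2 * j + 1) = -e (2 * j))
    (hsq : ∀ j ≤ N, (e (2 * j)) ^ 2 = e j) (z : ℂ) :
    lagr e (2 * N) (2 * N + 1) z = lagr e N (N + 1) (z ^ 2) :=
  stmt12_general N e hneg hsq z
end

section
/- Suppose (Λ_k)_{k≥1} is a sequence of nonnegative reals with Λ_1 = 1, Λ_{2N} = Λ_N for N ≥ 1, and Λ²_{2N+1} ≤ (1/2)Λ²_{N+1} + 2Λ²_N + 1/2 for N ≥ 1. Then for every k ≥ 1, Λ²_k ≤ 2^{-v₂(k)}·k, where v₂(k) is the 2-adic valuation of k. -/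
theorem stmt16 (Λ : ℕ → ℝ) (hnn : ∀ k ≥ 1, 0 ≤ Λ k) (h1 : Λ 1 = 1)
    (heven : ∀ N ≥ 1, Λ (2 * N) = Λ N)
    (hodd : ∀ N ≥ 1, Λ (2 * N + 1) ^ 2 ≤ (1 / 2) * Λ (N + 1) ^ 2 + 2 * Λ N ^ 2 + 1 / 2) :
    ∀ k ≥ 1, Λ k ^ 2 ≤ (2 : ℝ) ^ (-(padicValNat 2 k : ℤ)) * k := by
  haveI : Fact (Nat.Prime 2) := ⟨Nat.prime_two⟩
  have key : ∀ k, 1 ≤ k →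
      Λ k ^ 2 ≤ (2 : ℝ) ^ (-(padicValNat 2 k : ℤ)) * k ∧
      2 * Λ k ^ 2 + Λ (k + 1) ^ 2 ≤ 2 * k + 1 := by
    intro k
    induction k using Nat.strong_induction_on with
    | _ k ih =>
      intro hk
      rcases Nat.lt_or_ge k 2 with hk2 | hk2
      · interval_cases k
        have h2 : Λ 2 = Λ 1 := by simpa using heven 1 le_rfl
        constructor
        · simp [h1]
        · show 2 * Λ 1 ^ 2 + Λ 2 ^ 2 ≤ 2 * (1:ℕ) + 1
          rw [h2, h1]; norm_num
      · rcases Nat.even_or_odd k with ⟨M, hM⟩ | ⟨M, hM⟩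
        · -- k = 2*M, M ≥ 1
          have hMk : k = 2 * M := by omega
          have hM1 : 1 ≤ M := by omega
          obtain ⟨hP, hI⟩ := ih M (by omega) hM1
          have hPle : Λ M ^ 2 ≤ (M : ℝ) := by
            have h2le : (2 : ℝ) ^ (-(padicValNat 2 M : ℤ)) ≤ 1 :=
              zpow_le_one_of_nonpos₀ (by norm_num) (by omega)
            calc Λ M ^ 2 ≤ (2 : ℝ) ^ (-(padicValNat 2 M : ℤ)) * M := hP
              _ ≤ 1 * M := by
                  apply mul_le_mul_of_nonneg_right h2le (by positivity)
              _ = M := one_mul _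
          have hΛ : Λ k = Λ M := by rw [hMk]; exact heven M hM1
          have hv : padicValNat 2 k = padicValNat 2 M + 1 := by
            rw [hMk, padicValNat.mul (by norm_num) (by omega)]
            simp [padicValNat.self]
            omega
          constructor
          · have hpow : (2 : ℝ) ^ (-(padicValNat 2 k : ℤ)) * k
                = (2 : ℝ) ^ (-(padicValNat 2 M : ℤ)) * M := by
              rw [hv, hMk, Nat.cast_add, Nat.cast_one,
                show -((padicValNat 2 M : ℤ) + 1) = -(padicValNat 2 M : ℤ) + (-1) by ring,
                zpow_add₀ (by norm_num : (2:ℝ) ≠ 0), Nat.cast_mul, Nat.cast_ofNat]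
              norm_num
              ring
            rw [hpow, hΛ]
            exact hP
          · have ho := hodd M hM1
            have hk1 : Λ (k + 1) ^ 2 ≤ (1 / 2) * Λ (M + 1) ^ 2 + 2 * Λ M ^ 2 + 1 / 2 := by
              rw [show k + 1 = 2 * M + 1 by omega]; exact ho
            rw [hΛ]
            have : (k : ℝ) = 2 * M := by rw [hMk]; push_cast; ring
            rw [this]
            nlinarith [hnn (M+1) (by omega)]
        · -- k = 2*M + 1, M ≥ 1
          have hMk : k = 2 * M + 1 := by omega
          have hM1 : 1 ≤ M := by omega
          obtain ⟨hP, hI⟩ := ih M (by omega) hM1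
          have hPle : Λ M ^ 2 ≤ (M : ℝ) := by
            have h2le : (2 : ℝ) ^ (-(padicValNat 2 M : ℤ)) ≤ 1 :=
              zpow_le_one_of_nonpos₀ (by norm_num) (by omega)
            calc Λ M ^ 2 ≤ (2 : ℝ) ^ (-(padicValNat 2 M : ℤ)) * M := hP
              _ ≤ 1 * M := by
                  apply mul_le_mul_of_nonneg_right h2le (by positivity)
              _ = M := one_mul _
          have ho : Λ k ^ 2 ≤ (1 / 2) * Λ (M + 1) ^ 2 + 2 * Λ M ^ 2 + 1 / 2 := by
            rw [hMk]; exact hodd M hM1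
          have hv : padicValNat 2 k = 0 := by
            apply padicValNat.eq_zero_of_not_dvd
            omega
          constructor
          · rw [hv]
            simp only [Nat.cast_zero, neg_zero, zpow_zero, one_mul]
            have : (k : ℝ) = 2 * M + 1 := by rw [hMk]; push_cast; ring
            rw [this]
            nlinarith
          · have hΛ1 : Λ (k + 1) = Λ (M + 1) := by
              rw [show k + 1 = 2 * (M + 1) by omega]
              exact heven (M + 1) (by omega)
            rw [hΛ1]
            have : (k : ℝ) = 2 * M + 1 := by rw [hMk]; push_cast; ring
            rw [this]
            nlinarith
  intro k hk
  exact (key k hk).1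
end

section
/- Let e_k = exp(iπ Σ_{j=0}^{s} 2^{-p_j}) for k ≥ 1 with binary expansion k = 2^{p_0} + ⋯ + 2^{p_s} (0 ≤ p_0 < ⋯ < p_s), and e_0 = 1. Then for every n ≥ 0, the set {e_0, e_1, …, e_{2^n - 1}} equals the set of all 2^n-th roots of unity. -/
/-!
Doubling the index shifts the binary digits up by one place, which halves the exponent, and a
lowest digit `1` adds `π` to it: `e (2k) ^ 2 = e k` and `e (2k+1) = -e (2k)`. So the first
`2^(n+1)` points are the two square roots of each of the first `2^n` points, and by induction
these are exactly the square roots of the `2^n`-th roots of unity.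
-/

/-- `lejaSum k = Σ_j 2^{-p_j}` where `k = Σ_j 2^{p_j}` is the binary expansion of `k`. -/
noncomputable def lejaSum (k : ℕ) : ℝ :=
  ∑ p ∈ Finset.range (k + 1), if Nat.testBit k p then ((2 : ℝ) ^ p)⁻¹ else 0

/-- The natural Leja sequence of the unit disk: `e k = exp(iπ Σ_j 2^{-p_j})`. -/
noncomputable def lejaPt (k : ℕ) : ℂ :=
  Complex.exp (Real.pi * Complex.I * (lejaSum k : ℝ))

open Finset

theorem image_lt_two_pow_eq_two_pow_roots_of_unity {R : Type*} [CommRing R] [NoZeroDivisors R]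
    (f : ℕ → R) (h_zero : f 0 = 1) (h_two_mul : ∀ k, f (2 * k) ^ 2 = f k)
    (h_two_mul_add_one : ∀ k, f (2 * k + 1) = -f (2 * k)) (n : ℕ) :
    f '' {k | k < 2 ^ n} = {z | z ^ 2 ^ n = 1} := by
  induction n with
  | zero => ext z; simp [h_zero]
  | succ n ih =>
    have ih' (w : R) : w ^ 2 ^ n = 1 ↔ ∃ m < 2 ^ n, f m = w := by
      simpa using (Set.ext_iff.mp ih w).symm
    ext z
    simp only [Set.mem_image, Set.mem_ofPred_eq, pow_succ' 2 n, pow_mul]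
    constructor
    · rintro ⟨k, hk, rfl⟩
      obtain ⟨m, rfl | rfl⟩ := Nat.even_or_odd' k
      · rw [h_two_mul]
        exact (ih' _).mpr ⟨m, by omega, rfl⟩
      · rw [h_two_mul_add_one, neg_sq, h_two_mul]
        exact (ih' _).mpr ⟨m, by omega, rfl⟩
    · intro hz
      obtain ⟨m, hm, hm_eq⟩ := (ih' _).mp hz
      rw [← h_two_mul] at hm_eq
      rcases sq_eq_sq_iff_eq_or_eq_neg.mp hm_eq with h | h
      · exact ⟨2 * m, by omega, h⟩
      · exact ⟨2 * m + 1, by omega, by rw [h_two_mul_add_one, h, neg_neg]⟩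

lemma lejaSum_eq_sum_range {k m : ℕ} (hk : k < 2 ^ m) :
    lejaSum k = ∑ p ∈ range m, if k.testBit p then ((2 : ℝ) ^ p)⁻¹ else 0 := by
  have hmin : k < 2 ^ min m (k + 1) := by
    rcases min_choice m (k + 1) with h | h <;> rw [h]
    exacts [hk, Nat.lt_two_pow_self.trans (Nat.pow_lt_pow_succ one_lt_two)]
  have hvanish : ∀ p ≥ min m (k + 1), (if k.testBit p then ((2 : ℝ) ^ p)⁻¹ else 0) = 0 := by
    intro p hp
    rw [Nat.testBit_eq_false_of_lt (hmin.trans_le (Nat.pow_le_pow_right two_pos hp))]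
    rfl
  rw [lejaSum, eventually_constant_sum hvanish (min_le_right _ _),
    eventually_constant_sum hvanish (min_le_left _ _)]

lemma lejaSum_eq_add_lejaSum_div_two (k : ℕ) :
    lejaSum k = (if k.testBit 0 then 1 else 0) + lejaSum (k / 2) / 2 := by
  have hk : k / 2 < 2 ^ k := (Nat.div_le_self k 2).trans_lt Nat.lt_two_pow_self
  rw [lejaSum, sum_range_succ', lejaSum_eq_sum_range hk, sum_div, add_comm]
  congr 1
  · simp
  · refine sum_congr rfl fun p _ => ?_
    rw [Nat.testBit_succ]
    split_ifs <;> simp [pow_succ, div_eq_mul_inv, mul_comm]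

lemma lejaSum_two_mul (k : ℕ) : lejaSum (2 * k) = lejaSum k / 2 := by
  simp [lejaSum_eq_add_lejaSum_div_two (2 * k), Nat.testBit_zero]

lemma lejaSum_two_mul_add_one (k : ℕ) : lejaSum (2 * k + 1) = 1 + lejaSum k / 2 := by
  simp [lejaSum_eq_add_lejaSum_div_two (2 * k + 1), Nat.testBit_zero,
    show (2 * k + 1) / 2 = k by omega]

lemma lejaPt_zero : lejaPt 0 = 1 := by
  simp [lejaPt, lejaSum]

lemma lejaPt_two_mul_sq (k : ℕ) : lejaPt (2 * k) ^ 2 = lejaPt k := by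
  rw [lejaPt, lejaPt, ← Complex.exp_nat_mul, lejaSum_two_mul]
  push_cast
  ring_nf

lemma lejaPt_two_mul_add_one (k : ℕ) : lejaPt (2 * k + 1) = -lejaPt (2 * k) := by
  rw [lejaPt, lejaPt, lejaSum_two_mul_add_one, lejaSum_two_mul]
  push_cast
  rw [mul_add, Complex.exp_add, mul_one, Complex.exp_pi_mul_I, neg_one_mul]

theorem stmt19 (n : ℕ) :
    (lejaPt '' {k : ℕ | k < 2 ^ n}) = {z : ℂ | z ^ (2 ^ n) = 1} :=
  image_lt_two_pow_eq_two_pow_roots_of_unity lejaPt lejaPt_zero lejaPt_two_mul_sq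
    lejaPt_two_mul_add_one n
end
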